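/- arXiv:1304.5700 — 2 statements merged into one kernel-verified Lean document; each statement's English description precedes it below -/
import Mathlib

section
/- Let K ≥ 3 be an integer. Consider complex channel coefficients: scalars h_{ki} ∈ ℂ for k,i ∈ {1,…,K}; vectors p_i ∈ ℂ^{K-1} for i ∈ {1,…,K}; and vectors q_k ∈ ℂ^{K-1} for k ∈ {1,…,K}. Then for almost every choice of these coefficients, there exist a nonzero matrix U ∈ ℂ^{(K-1)×(K-1)} and scalars λ_1, …, λ_K ∈ ℂ such that for every k ∈ {1,…,K}: (a) q_kᵀ·U·p_i = λ_k·h_{ki} for every i ≠ k; and (b) q_kᵀ·U·p_k ≠ λ_k·h_{kk}. -/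
/-!
Write `m = K - 1`, let `P`, `Q` be the matrices whose rows are the first `m` transmit vectors
`p_i` and receive vectors `q_k`, and `b`, `a` the (adjugate) coordinates of `p_m`, `q_m` in these
rows. Replacing `U` by `N = Q U Pᵀ`, and rescaling the last user by `det P`, `det Q`, turns the
channel into the standard one with vectors `e_0, …, e_{m-1}, b` and `e_0, …, e_{m-1}, a`, where
`q_k ⬝ U p_i = N k i` for `k, i < m`. The alignment equations of receiver `k < m` then fix row
`k` of `N` up to the factor `λ_k`; those of receiver `m` become a square linear system
`V λ = λ_m μ`, solved by `λ = adj V μ`, `λ_m = det V`. All quantities are polynomials in the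
channel, and the finitely many inequalities needed along the way (their product is
`relayNondegeneracy`) hold at one explicit channel. A polynomial function that is nonzero at one
point vanishes only on a null set: on a product space, slicing at a point where it does not
vanish shows that almost every slice is a nonzero polynomial function, so Fubini and induction
on the number of variables reduce this to the finitely many roots of a one-variable polynomial.
-/

open MeasureTheory Matrix

section Precomp

variable (𝕜 : Type*) [CommRing 𝕜] {X Y : Type*}

def precompAlgHom (g : X → Y) : (Y → 𝕜) →ₐ[𝕜] (X → 𝕜) :=
  AlgHom.pi fun x => Pi.evalAlgHom 𝕜 (fun _ => 𝕜) (g x)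

variable {𝕜}

def prodSubalgebra (A : Subalgebra 𝕜 (X → 𝕜)) (B : Subalgebra 𝕜 (Y → 𝕜)) :
    Subalgebra 𝕜 (X × Y → 𝕜) :=
  A.map (precompAlgHom 𝕜 Prod.fst) ⊔ B.map (precompAlgHom 𝕜 Prod.snd)

def piSubalgebra (ι : Type*) (A : Subalgebra 𝕜 (X → 𝕜)) : Subalgebra 𝕜 ((ι → X) → 𝕜) :=
  ⨆ j, A.map (precompAlgHom 𝕜 fun x : ι → X => x j)

variable {A : Subalgebra 𝕜 (X → 𝕜)} {B : Subalgebra 𝕜 (Y → 𝕜)}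

theorem comp_fst_mem_prodSubalgebra {F : X → 𝕜} (hF : F ∈ A) : F ∘ Prod.fst ∈ prodSubalgebra A B :=
  Algebra.mem_sup_left ⟨F, hF, rfl⟩

theorem comp_snd_mem_prodSubalgebra {F : Y → 𝕜} (hF : F ∈ B) : F ∘ Prod.snd ∈ prodSubalgebra A B :=
  Algebra.mem_sup_right ⟨F, hF, rfl⟩

theorem comp_eval_mem_piSubalgebra {ι : Type*} {F : X → 𝕜} (hF : F ∈ A) (j : ι) :
    (fun x : ι → X => F (x j)) ∈ piSubalgebra ι A :=
  le_iSup (fun j => A.map (precompAlgHom 𝕜 fun x : ι → X => x j)) j ⟨F, hF, rfl⟩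

theorem prodSubalgebra_le_comap_left (y : Y) :
    prodSubalgebra A B ≤ A.comap (precompAlgHom 𝕜 fun x => (x, y)) :=
  sup_le (Subalgebra.map_le.2 fun _ hF => hF)
    (Subalgebra.map_le.2 fun G _ => A.algebraMap_mem (G y))

theorem prodSubalgebra_le_comap_right (x : X) :
    prodSubalgebra A B ≤ B.comap (precompAlgHom 𝕜 fun y => (x, y)) :=
  sup_le (Subalgebra.map_le.2 fun F _ => B.algebraMap_mem (F x))
    (Subalgebra.map_le.2 fun _ hG => hG)

theorem piSubalgebra_succ_le_comap {n : ℕ} :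
    piSubalgebra (Fin (n + 1)) A ≤ (prodSubalgebra A (piSubalgebra (Fin n) A)).comap
      (precompAlgHom 𝕜 fun z : X × (Fin n → X) => Fin.cons z.1 z.2) := by
  refine iSup_le fun j => Subalgebra.map_le.2 fun F hF => ?_
  induction j using Fin.cases with
  | zero => exact comp_fst_mem_prodSubalgebra hF
  | succ j => exact comp_snd_mem_prodSubalgebra (comp_eval_mem_piSubalgebra hF j)

end Precomp

section NullZeroSets

variable (𝕜 : Type*) [CommRing 𝕜] [MeasurableSpace 𝕜] [MeasurableAdd₂ 𝕜] [MeasurableMul₂ 𝕜]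
  {X Y : Type*} [MeasurableSpace X] [MeasurableSpace Y]

def measurableSubalgebra (X : Type*) [MeasurableSpace X] : Subalgebra 𝕜 (X → 𝕜) where
  carrier := {F | Measurable F}
  mul_mem' := Measurable.mul
  add_mem' := Measurable.add
  algebraMap_mem' _ := measurable_const

variable {𝕜}

structure NullZeroSets (μ : Measure X) (A : Subalgebra 𝕜 (X → 𝕜)) : Prop where
  le_measurable : A ≤ measurableSubalgebra 𝕜 X
  ae_ne_zero : ∀ F ∈ A, F ≠ 0 → ∀ᵐ x ∂μ, F x ≠ 0

variable {μ : Measure X} {ν : Measure Y}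
  {A : Subalgebra 𝕜 (X → 𝕜)} {B : Subalgebra 𝕜 (Y → 𝕜)}

theorem prodSubalgebra_le_measurableSubalgebra (hA : A ≤ measurableSubalgebra 𝕜 X)
    (hB : B ≤ measurableSubalgebra 𝕜 Y) : prodSubalgebra A B ≤ measurableSubalgebra 𝕜 (X × Y) :=
  sup_le (Subalgebra.map_le.2 fun _ hF => (hA hF).comp measurable_fst)
    (Subalgebra.map_le.2 fun _ hG => (hB hG).comp measurable_snd)

theorem NullZeroSets.prod [MeasurableSingletonClass 𝕜] [SFinite ν] (hA : NullZeroSets μ A)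
    (hB : NullZeroSets ν B) :
    NullZeroSets (μ.prod ν) (prodSubalgebra A B) where
  le_measurable := prodSubalgebra_le_measurableSubalgebra hA.le_measurable hB.le_measurable
  ae_ne_zero F hF hF0 := by
    obtain ⟨⟨x₀, y₀⟩, h₀⟩ := Function.ne_iff.1 hF0
    have hmeas : Measurable F :=
      prodSubalgebra_le_measurableSubalgebra hA.le_measurable hB.le_measurable hF
    refine (Measure.ae_prod_iff_ae_ae (p := fun z => F z ≠ 0)
      (hmeas (measurableSet_singleton 0)).compl).2 ?_
    filter_upwards [hA.ae_ne_zero _ (prodSubalgebra_le_comap_left y₀ hF)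
      (Function.ne_iff.2 ⟨x₀, h₀⟩)] with x hx
    exact hB.ae_ne_zero _ (prodSubalgebra_le_comap_right x hF) (Function.ne_iff.2 ⟨y₀, hx⟩)

theorem NullZeroSets.pi [MeasurableSingletonClass 𝕜] [SigmaFinite μ] (hA : NullZeroSets μ A) :
    ∀ n : ℕ, NullZeroSets (Measure.pi fun _ : Fin n => μ) (piSubalgebra (Fin n) A)
  | 0 =>
    { le_measurable := fun _ _ => Subsingleton.measurable
      ae_ne_zero := fun F _ hF0 => by
        obtain ⟨x₀, h₀⟩ := Function.ne_iff.1 hF0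
        exact ae_of_all _ fun x => Subsingleton.elim x₀ x ▸ h₀ }
  | n + 1 => by
    set e := MeasurableEquiv.piFinSuccAbove (fun _ : Fin (n + 1) => X) 0
    have he : MeasurePreserving e (Measure.pi fun _ => μ)
        (μ.prod (Measure.pi fun _ : Fin n => μ)) := measurePreserving_piFinSuccAbove (fun _ => μ) 0
    have hcons : ⇑e.symm = fun z => Fin.cons z.1 z.2 := by
      funext z
      simp only [e, MeasurableEquiv.piFinSuccAbove, Fin.insertNthEquiv_zero,
        MeasurableEquiv.symm_mk, Equiv.symm_symm, MeasurableEquiv.coe_mk]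
      rfl
    have hprod := hA.prod (hA.pi n)
    have hmem : ∀ F ∈ piSubalgebra (Fin (n + 1)) A,
        F ∘ e.symm ∈ prodSubalgebra A (piSubalgebra (Fin n) A) := by
      intro F hF
      rw [hcons]
      exact piSubalgebra_succ_le_comap hF
    refine ⟨fun F hF => ?_, fun F hF hF0 => ?_⟩
    · show Measurable F
      simpa [Function.comp_assoc] using (hprod.le_measurable (hmem F hF)).comp e.measurable
    · have hG0 : F ∘ e.symm ≠ 0 := fun h =>
        hF0 (by simpa [Function.comp_assoc] using congrArg (· ∘ e) h)
      filter_upwards [he.quasiMeasurePreserving.ae (hprod.ae_ne_zero _ (hmem F hF) hG0)] with x hx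
      simpa using hx

theorem nullZeroSets_adjoin_id [IsDomain 𝕜] [MeasurableSingletonClass 𝕜] (μ : Measure 𝕜)
    [NullSingletonClass μ] : NullZeroSets μ (Algebra.adjoin 𝕜 {id}) where
  le_measurable := Algebra.adjoin_le (Set.singleton_subset_iff.2 measurable_id)
  ae_ne_zero F hF hF0 := by
    rw [Algebra.adjoin_singleton_eq_range_aeval] at hF
    obtain ⟨p, rfl⟩ := hF
    have hp : p ≠ 0 := by
      rintro rfl
      exact hF0 (map_zero _)
    filter_upwards [measure_eq_zero_iff_ae_notMem.1
      ((Polynomial.finite_setOfPred_isRoot hp).measure_zero μ)] with x hx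
    simpa [Polynomial.aeval_fn_apply] using hx

end NullZeroSets

theorem Matrix.adjugate_map {R S n : Type*} [CommRing R] [CommRing S] [Fintype n] [DecidableEq n]
    (f : R →+* S) (M : Matrix n n R) : (M.map f).adjugate = M.adjugate.map f :=
  (f.map_adjugate M).symm

namespace RelayAlignment

section Alignment

variable {R : Type*} [CommRing R] {ι κ κ' : Type*} [Fintype κ] [Fintype κ']

def IsAlignment (H : ι → ι → R) (p q : ι → κ → R) (U : Matrix κ κ R) (lam : ι → R) : Prop :=
  ∀ k, (∀ i, i ≠ k → q k ⬝ᵥ U *ᵥ p i = lam k * H k i) ∧ q k ⬝ᵥ U *ᵥ p k ≠ lam k * H k k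

theorem vecMul_dotProduct_mulVec_vecMul (x y : κ' → R) (Q P : Matrix κ' κ R)
    (U : Matrix κ κ R) : (x ᵥ* Q) ⬝ᵥ U *ᵥ (y ᵥ* P) = x ⬝ᵥ (Q * U * Pᵀ) *ᵥ y := by
  rw [← mulVec_transpose P y, ← mulVec_mulVec, ← mulVec_mulVec, dotProduct_mulVec x Q]

theorem isAlignment_vecMul_iff {H : ι → ι → R} {p q : ι → κ' → R} {Q P : Matrix κ' κ R}
    {U : Matrix κ κ R} {lam : ι → R} :
    IsAlignment H (fun i => p i ᵥ* P) (fun k => q k ᵥ* Q) U lam ↔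
      IsAlignment H p q (Q * U * Pᵀ) lam := by
  simp only [IsAlignment, vecMul_dotProduct_mulVec_vecMul]

theorem IsAlignment.of_smul [IsDomain R] {H : ι → ι → R} {p q : ι → κ → R} {U : Matrix κ κ R}
    {lam r s : ι → R} (hr : ∀ k, r k ≠ 0) (hs : ∀ i, s i ≠ 0)
    (h : IsAlignment (fun k i => r k * H k i * s i) (fun i => s i • p i) (fun k => r k • q k)
      U lam) :
    IsAlignment H p q U lam := by
  have hsmul : ∀ k i, r k • q k ⬝ᵥ U *ᵥ (s i • p i) = r k * s i * (q k ⬝ᵥ U *ᵥ p i) := by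
    intro k i
    rw [mulVec_smul, dotProduct_smul, smul_dotProduct, smul_eq_mul, smul_eq_mul]
    ring
  have hcancel : ∀ k i x, r k * s i * x = lam k * (r k * H k i * s i) ↔ x = lam k * H k i := by
    intro k i x
    rw [show lam k * (r k * H k i * s i) = r k * s i * (lam k * H k i) by ring,
      mul_right_inj' (mul_ne_zero (hr k) (hs i))]
  intro k
  obtain ⟨ha, hb⟩ := h k
  simp only [ne_eq, hsmul, hcancel] at ha hb
  exact ⟨ha, hb⟩

theorem IsAlignment.ne_zero [IsDomain R] {H : ι → ι → R} {p q : ι → κ → R}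
    {U : Matrix κ κ R} {lam : ι → R} (h : IsAlignment H p q U lam) {k i : ι} (hik : i ≠ k)
    (hH : H k i ≠ 0) : U ≠ 0 := by
  rintro rfl
  obtain ⟨ha, hb⟩ := h k
  simp only [zero_mulVec, dotProduct_zero] at ha hb
  have hlam : lam k = 0 := (mul_eq_zero.1 (ha i hik).symm).resolve_right hH
  exact hb (by rw [hlam, zero_mul])

end Alignment

section Normalized

variable {R : Type*} [CommRing R] {m : ℕ}

def snocBasis (v : Fin m → R) : Fin (m + 1) → Fin m → R :=
  Fin.snoc (fun i => Pi.single i 1) v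

@[simp] theorem snocBasis_castSucc (v : Fin m → R) (i : Fin m) :
    snocBasis v i.castSucc = Pi.single i 1 := by
  simp [snocBasis]

@[simp] theorem snocBasis_last (v : Fin m → R) : snocBasis v (Fin.last m) = v := by
  simp [snocBasis]

variable (H : Fin (m + 1) → Fin (m + 1) → R) (α β : Fin m → R)

def residual (k : Fin m) : R :=
  H k.castSucc (Fin.last m) - ∑ i, H k.castSucc i.castSucc * β i

-- Row `i`: `β i` times the equation of receiver `m` against interferer `i`, in the unknowns `λ_k`.
def lastRowMatrix : Matrix (Fin m) (Fin m) R :=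
  of (fun i k => β i * α k * H k.castSucc i.castSucc) + diagonal fun i => α i * residual H β i

def multipliers : Fin m → R :=
  adjugate (lastRowMatrix H α β) *ᵥ fun i => β i * H (Fin.last m) i.castSucc

def cornerDefect : R :=
  ∑ k, α k * multipliers H α β k * H k.castSucc (Fin.last m) -
    (lastRowMatrix H α β).det * H (Fin.last m) (Fin.last m)

def nondegeneracy : R :=
  (∏ k, β k * multipliers H α β k * residual H β k) * cornerDefect H α β

theorem lastRowMatrix_mulVec_multipliers :
    lastRowMatrix H α β *ᵥ multipliers H α β =
      (lastRowMatrix H α β).det • fun i => β i * H (Fin.last m) i.castSucc := by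
  rw [multipliers, mulVec_mulVec, mul_adjugate, smul_mulVec, one_mulVec]

end Normalized

section NormalizedField

variable {K : Type*} [Field K] {m : ℕ} (H : Fin (m + 1) → Fin (m + 1) → K) (α β : Fin m → K)

-- The diagonal entry is the one forced by the equation of receiver `k` against interferer `m`.
def alignedMatrix : Matrix (Fin m) (Fin m) K :=
  of fun k i => multipliers H α β k *
    (H k.castSucc i.castSucc + if i = k then residual H β k / β k else 0)

variable {H α β}

theorem alignedMatrix_mulVec (hβ : ∀ k, β k ≠ 0) (k : Fin m) :
    (alignedMatrix H α β *ᵥ β) k = multipliers H α β k * H k.castSucc (Fin.last m) := by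
  simp only [mulVec, dotProduct, alignedMatrix, residual, mul_add, mul_ite, mul_zero, of_apply,
    add_mul, mul_assoc, ite_mul, zero_mul, Finset.sum_add_distrib, ← Finset.mul_sum,
    Finset.sum_ite_eq', Finset.mem_univ, if_true, div_mul_cancel₀ _ (hβ k)]
  ring

theorem vecMul_alignedMatrix (hβ : ∀ k, β k ≠ 0) (i : Fin m) :
    (α ᵥ* alignedMatrix H α β) i =
      (lastRowMatrix H α β).det * H (Fin.last m) i.castSucc := by
  have h := congrFun (lastRowMatrix_mulVec_multipliers H α β) i
  refine mul_left_cancel₀ (hβ i) ?_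
  calc β i * (α ᵥ* alignedMatrix H α β) i = (lastRowMatrix H α β *ᵥ multipliers H α β) i := by
        rw [lastRowMatrix, add_mulVec, Pi.add_apply, mulVec_diagonal]
        simp only [alignedMatrix, vecMul, mulVec, dotProduct, of_apply, mul_add,
          Finset.sum_add_distrib, Finset.mul_sum, mul_ite, mul_zero, Finset.sum_ite_eq,
          Finset.mem_univ, if_true]
        field_simp [hβ i]
        simp only [mul_right_comm _ (H _ _)]
    _ = _ := by rw [h]; simp only [Pi.smul_apply, smul_eq_mul]; ring

theorem isAlignment_snocBasis (hβ : ∀ k, β k ≠ 0) (hlam : ∀ k, multipliers H α β k ≠ 0)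
    (hres : ∀ k, residual H β k ≠ 0) (hc : cornerDefect H α β ≠ 0) :
    IsAlignment H (snocBasis β) (snocBasis α) (alignedMatrix H α β)
      (Fin.snoc (multipliers H α β) (lastRowMatrix H α β).det) := by
  have entry : ∀ k i, snocBasis α k.castSucc ⬝ᵥ alignedMatrix H α β *ᵥ snocBasis β i.castSucc =
      alignedMatrix H α β k i := by
    intro k i
    rw [snocBasis_castSucc, snocBasis_castSucc, single_dotProduct, one_mul, mulVec_single_one]
    rfl
  intro k
  induction k using Fin.lastCases with
  | last =>
    refine ⟨fun i hi => ?_, ?_⟩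
    · induction i using Fin.lastCases with
      | last => exact absurd rfl hi
      | cast i =>
        rw [Fin.snoc_last, snocBasis_last, snocBasis_castSucc, dotProduct_mulVec,
          dotProduct_single, mul_one]
        exact vecMul_alignedMatrix hβ i
    · rw [Fin.snoc_last, snocBasis_last, snocBasis_last]
      intro h
      apply hc
      rw [cornerDefect, sub_eq_zero, ← h]
      simp only [dotProduct, alignedMatrix_mulVec hβ, mul_assoc]
  | cast k =>
    refine ⟨fun i hi => ?_, ?_⟩
    · induction i using Fin.lastCases with
      | last =>
        rw [Fin.snoc_castSucc, snocBasis_castSucc, snocBasis_last, single_dotProduct, one_mul]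
        exact alignedMatrix_mulVec hβ k
      | cast i =>
        have hik : i ≠ k := fun h => hi (h ▸ rfl)
        rw [entry, Fin.snoc_castSucc, alignedMatrix, of_apply, if_neg hik, add_zero]
    · rw [entry, Fin.snoc_castSucc, alignedMatrix, of_apply, if_pos rfl, mul_add, ne_eq,
        add_eq_left]
      exact mul_ne_zero (hlam k) (div_ne_zero (hres k) (hβ k))

end NormalizedField

section Reduction

variable {R : Type*} [CommRing R] {m : ℕ}

def firstRows (v : Fin (m + 1) → Fin m → R) : Matrix (Fin m) (Fin m) R :=
  of fun i => v i.castSucc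

def lastCoeffs (v : Fin (m + 1) → Fin m → R) : Fin m → R :=
  adjugate (firstRows v)ᵀ *ᵥ v (Fin.last m)

-- The channel seen after multiplying `p_m` by `det P` and `q_m` by `det Q`.
def scaledChannel (H : Fin (m + 1) → Fin (m + 1) → R) (p q : Fin (m + 1) → Fin m → R) :
    Fin (m + 1) → Fin (m + 1) → R :=
  fun k i => (Pi.mulSingle (Fin.last m) (firstRows q).det : Fin (m + 1) → R) k * H k i *
    (Pi.mulSingle (Fin.last m) (firstRows p).det : Fin (m + 1) → R) i

-- The factor `H m 0` is what rules out `U = 0`.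
def relayNondegeneracy (H : Fin (m + 1) → Fin (m + 1) → R) (p q : Fin (m + 1) → Fin m → R) : R :=
  (firstRows p).det * (firstRows q).det * H (Fin.last m) 0 *
    nondegeneracy (scaledChannel H p q) (lastCoeffs q) (lastCoeffs p)

theorem snocBasis_lastCoeffs_vecMul (v : Fin (m + 1) → Fin m → R) (i : Fin (m + 1)) :
    snocBasis (lastCoeffs v) i ᵥ* firstRows v =
      (Pi.mulSingle (Fin.last m) (firstRows v).det : Fin (m + 1) → R) i • v i := by
  induction i using Fin.lastCases with
  | last =>
    rw [snocBasis_last, Pi.mulSingle_eq_same, lastCoeffs, ← mulVec_transpose, mulVec_mulVec,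
      mul_adjugate, det_transpose, smul_mulVec, one_mulVec]
  | cast i =>
    rw [snocBasis_castSucc, Pi.mulSingle_eq_of_ne (Fin.castSucc_lt_last i).ne, single_one_vecMul,
      one_smul]
    rfl

variable {K : Type*} [Field K]

theorem exists_isAlignment {H : Fin (m + 1) → Fin (m + 1) → K} {p q : Fin (m + 1) → Fin m → K}
    (hm : m ≠ 0) (h : relayNondegeneracy H p q ≠ 0) :
    ∃ U : Matrix (Fin m) (Fin m) K, U ≠ 0 ∧ ∃ lam, IsAlignment H p q U lam := by
  simp only [relayNondegeneracy, nondegeneracy, ne_eq, mul_eq_zero, not_or,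
    Finset.prod_eq_zero_iff, Finset.mem_univ, true_and, not_exists] at h
  obtain ⟨⟨⟨hP, hQ⟩, hH⟩, hprod, hc⟩ := h
  have hN := isAlignment_snocBasis (fun k => (hprod k).1.1) (fun k => (hprod k).1.2)
    (fun k => (hprod k).2) hc
  obtain ⟨U, hU⟩ : ∃ U, firstRows q * U * (firstRows p)ᵀ =
      alignedMatrix (scaledChannel H p q) (lastCoeffs q) (lastCoeffs p) :=
    ⟨(firstRows q)⁻¹ * alignedMatrix (scaledChannel H p q) (lastCoeffs q) (lastCoeffs p) *
      (firstRows p)ᵀ⁻¹, by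
      rw [← Matrix.mul_assoc, mul_nonsing_inv_cancel_left _ _ (isUnit_iff_ne_zero.2 hQ),
        nonsing_inv_mul_cancel_right _ _ (by simpa using hP)]⟩
  rw [← hU, ← isAlignment_vecMul_iff] at hN
  simp only [snocBasis_lastCoeffs_vecMul] at hN
  have hscale : ∀ {d : K}, d ≠ 0 → ∀ k,
      (Pi.mulSingle (Fin.last m) d : Fin (m + 1) → K) k ≠ 0 := by
    intro d hd k
    by_cases hk : k = Fin.last m <;> simp [hk, hd]
  have halign := hN.of_smul (hscale hQ) (hscale hP)
  have h0 : (0 : Fin (m + 1)) ≠ Fin.last m := by simpa [Fin.ext_iff, eq_comm] using hm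
  exact ⟨U, halign.ne_zero h0 hH, _, halign⟩

end Reduction

section Map

variable {R S : Type*} [CommRing R] [CommRing S] (f : R →+* S) {m : ℕ}
  (H : Fin (m + 1) → Fin (m + 1) → R) (α β : Fin m → R) (p q : Fin (m + 1) → Fin m → R)

theorem residual_map : residual (fun k i => f (H k i)) (f ∘ β) = f ∘ residual H β := by
  ext k
  simp [residual, map_sum]

theorem lastRowMatrix_map :
    lastRowMatrix (fun k i => f (H k i)) (f ∘ α) (f ∘ β) = (lastRowMatrix H α β).map f := by
  ext i k
  simp only [lastRowMatrix, residual_map, map_apply, Matrix.add_apply, of_apply, diagonal_apply,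
    Function.comp_apply, map_add, map_mul]
  split_ifs <;> simp

theorem multipliers_map :
    multipliers (fun k i => f (H k i)) (f ∘ α) (f ∘ β) = f ∘ multipliers H α β := by
  ext k
  rw [multipliers, lastRowMatrix_map, adjugate_map,
    Function.comp_apply, multipliers, RingHom.map_mulVec]
  simp [Function.comp_def]

theorem nondegeneracy_map :
    nondegeneracy (fun k i => f (H k i)) (f ∘ α) (f ∘ β) = f (nondegeneracy H α β) := by
  simp [nondegeneracy, cornerDefect, multipliers_map, residual_map, lastRowMatrix_map, map_prod,
    map_sum, RingHom.map_det]

theorem firstRows_map : firstRows (fun i j => f (p i j)) = (firstRows p).map f := rfl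

theorem lastCoeffs_map : lastCoeffs (fun i j => f (p i j)) = f ∘ lastCoeffs p := by
  ext k
  rw [lastCoeffs, firstRows_map, ← transpose_map, adjugate_map,
    Function.comp_apply, lastCoeffs, RingHom.map_mulVec]
  rfl

theorem scaledChannel_map :
    scaledChannel (fun k i => f (H k i)) (fun i j => f (p i j)) (fun i j => f (q i j)) =
      fun k i => f (scaledChannel H p q k i) := by
  ext k i
  simp only [scaledChannel, firstRows_map, map_mul, RingHom.map_det, RingHom.mapMatrix_apply,
    Pi.apply_mulSingle (fun _ => f) (fun _ => map_one f)]

theorem relayNondegeneracy_map :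
    relayNondegeneracy (fun k i => f (H k i)) (fun i j => f (p i j)) (fun i j => f (q i j)) =
      f (relayNondegeneracy H p q) := by
  simp only [relayNondegeneracy, scaledChannel_map, lastCoeffs_map, firstRows_map,
    nondegeneracy_map, map_mul, RingHom.map_det, RingHom.mapMatrix_apply]

end Map

section Witness

variable {R : Type*} [CommRing R] {m : ℕ}

def crossChannel : Fin (m + 1) → Fin (m + 1) → R :=
  fun k i => if (k = Fin.last m ↔ i = Fin.last m) then 0 else 1

theorem firstRows_snocBasis (v : Fin m → R) : firstRows (snocBasis v) = 1 := by
  ext i j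
  simp [firstRows, one_apply, Pi.single_apply, eq_comm]

theorem lastCoeffs_snocBasis (v : Fin m → R) : lastCoeffs (snocBasis v) = v := by
  simp [lastCoeffs, firstRows_snocBasis]

theorem relayNondegeneracy_crossChannel (hm : m ≠ 0) :
    relayNondegeneracy crossChannel (snocBasis (1 : Fin m → R)) (snocBasis 1) = m := by
  have hres : residual (crossChannel (R := R) (m := m)) (1 : Fin m → R) = 1 := by
    ext k
    simp [residual, crossChannel, (Fin.castSucc_lt_last _).ne]
  have hV : lastRowMatrix (crossChannel (R := R) (m := m)) 1 1 = 1 := by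
    ext i k
    simp [lastRowMatrix, hres, crossChannel, (Fin.castSucc_lt_last _).ne, one_apply]
  have hlam : multipliers (crossChannel (R := R) (m := m)) 1 1 = 1 := by
    ext k
    simp [multipliers, hV, crossChannel, (Fin.castSucc_lt_last _).ne]
  have hlast : (0 : Fin (m + 1)) ≠ Fin.last m := by simpa [Fin.ext_iff, eq_comm] using hm
  have hH :
      scaledChannel crossChannel (snocBasis (1 : Fin m → R)) (snocBasis 1) = crossChannel := by
    ext k i
    simp [scaledChannel, firstRows_snocBasis]
  rw [relayNondegeneracy, hH, lastCoeffs_snocBasis, nondegeneracy, cornerDefect, hres, hV, hlam]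
  simp [firstRows_snocBasis, crossChannel, hlast, (Fin.castSucc_lt_last _).ne]

end Witness

section Genericity

abbrev ChannelParams (m : ℕ) : Type :=
  (Fin (m + 1) → Fin (m + 1) → ℂ) × (Fin (m + 1) → Fin m → ℂ) × (Fin (m + 1) → Fin m → ℂ)

set_option synthInstance.maxSize 512 in
theorem ae_relayNondegeneracy_ne_zero {m : ℕ} (hm : m ≠ 0) :
    ∀ᵐ ω : ChannelParams m, relayNondegeneracy ω.1 ω.2.1 ω.2.2 ≠ 0 := by
  let P : ∀ n k : ℕ, Subalgebra ℂ ((Fin n → Fin k → ℂ) → ℂ) :=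
    fun n k => piSubalgebra (Fin n) (piSubalgebra (Fin k) (Algebra.adjoin ℂ {id}))
  have hP : ∀ n k, NullZeroSets volume (P n k) :=
    fun n k => ((nullZeroSets_adjoin_id volume).pi k).pi n
  have hcoord : ∀ {n k} (i : Fin n) (j : Fin k), (fun v : Fin n → Fin k → ℂ => v i j) ∈ P n k :=
    fun i j => comp_eval_mem_piSubalgebra
      (comp_eval_mem_piSubalgebra (Algebra.subset_adjoin (Set.mem_singleton id)) j) i
  set A := prodSubalgebra (P (m + 1) (m + 1)) (prodSubalgebra (P (m + 1) m) (P (m + 1) m))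
  have hA : NullZeroSets volume A := (hP _ _).prod ((hP _ _).prod (hP _ _))
  let H : Fin (m + 1) → Fin (m + 1) → A :=
    fun k i => ⟨_, comp_fst_mem_prodSubalgebra (hcoord k i)⟩
  let p : Fin (m + 1) → Fin m → A :=
    fun i j => ⟨_, comp_snd_mem_prodSubalgebra (comp_fst_mem_prodSubalgebra (hcoord i j))⟩
  let q : Fin (m + 1) → Fin m → A :=
    fun i j => ⟨_, comp_snd_mem_prodSubalgebra (comp_snd_mem_prodSubalgebra (hcoord i j))⟩
  -- Computed over the ring `A`, from the coordinate functions; evaluation at `ω` is a ring hom.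
  let F : A := relayNondegeneracy H p q
  have hF : ∀ ω : ChannelParams m,
      (F : ChannelParams m → ℂ) ω = relayNondegeneracy ω.1 ω.2.1 ω.2.2 := fun ω =>
    (relayNondegeneracy_map ((Pi.evalRingHom (fun _ => ℂ) ω).comp A.val.toRingHom) H p q).symm
  have hF0 : (F : ChannelParams m → ℂ) ≠ 0 := by
    intro h
    have := congrFun h (crossChannel, snocBasis 1, snocBasis 1)
    rw [hF, relayNondegeneracy_crossChannel hm, Pi.zero_apply] at this
    exact hm (by exact_mod_cast this)
  filter_upwards [hA.ae_ne_zero _ F.2 hF0] with ω hω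
  rwa [hF] at hω

end Genericity

end RelayAlignment

/-- **Corollary 4 (linear-algebraic content): K-user interference channel with one
(K-1)-antenna relay.** For almost every choice of the channel coefficients (`h` direct
scalars, `p` transmitter-to-relay vectors, `q` relay-to-receiver vectors), there exist a
nonzero relay precoding matrix `U ∈ ℂ^{(K-1)×(K-1)}` and scalars `λ_1, …, λ_K` such that for
every receiver `k`: (a) `q_kᵀ·U·p_i = λ_k·h_{ki}` for every interferer `i ≠ k` (all
interference stays aligned on one line), and (b) `q_kᵀ·U·p_k ≠ λ_k·h_{kk}` (the intended
stream escapes that line). -/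
theorem kuser_ic_single_multiantenna_relay_alignment (K : ℕ) (hK : 3 ≤ K) :
    ∀ᵐ hpq ∂(volume : Measure ((Fin K → Fin K → ℂ) ×
        (Fin K → Fin (K - 1) → ℂ) × (Fin K → Fin (K - 1) → ℂ))),
      ∃ U : Matrix (Fin (K - 1)) (Fin (K - 1)) ℂ, U ≠ 0 ∧
        ∃ lam : Fin K → ℂ,
          ∀ k : Fin K,
            (∀ i, i ≠ k →
              hpq.2.2 k ⬝ᵥ U.mulVec (hpq.2.1 i) = lam k * hpq.1 k i) ∧
            hpq.2.2 k ⬝ᵥ U.mulVec (hpq.2.1 k) ≠ lam k * hpq.1 k k := by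
  obtain ⟨m, rfl⟩ : ∃ m, K = m + 1 := ⟨K - 1, by omega⟩
  filter_upwards [RelayAlignment.ae_relayNondegeneracy_ne_zero (m := m) (by omega)] with ω hω
  exact RelayAlignment.exists_isAlignment (by omega) hω
end

section
/- Let K ≥ 3 be an integer and set J = K(K-2). Consider complex channel coefficients: scalars h_{ki}(1), h_{ki}(2) ∈ ℂ for k,i ∈ {1,…,K}; scalars p_{j,i} ∈ ℂ for j ∈ {1,…,J}, i ∈ {1,…,K}; and scalars q_{k,j} ∈ ℂ for k ∈ {1,…,K}, j ∈ {1,…,J}. Then for almost every choice of these coefficients, there exist scalars u_1, …, u_J ∈ ℂ with the following property. For each k,i ∈ {1,…,K} define the vector v^k_i = (h_{ki}(1), h_{ki}(2) + Σ_{j=1}^{J} u_j·q_{k,j}·p_{j,i}) ∈ ℂ². Then for every k ∈ {1,…,K}: (a) the K-1 interference vectors {v^k_i : i ≠ k} all lie on a single one-dimensional subspace of ℂ²; and (b) the intended vector v^k_k does not lie on that subspace. -/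
open MeasureTheory Matrix MvPolynomial

set_option synthInstance.maxSize 512
set_option maxHeartbeats 1000000

lemma measurable_mv_eval {σ : Type*} [Fintype σ] (p : MvPolynomial σ ℂ) :
    Measurable fun x : σ → ℂ => MvPolynomial.eval x p := by
  simp_rw [MvPolynomial.eval_eq]
  exact Finset.measurable_sum _ fun d _ =>
    (Finset.measurable_prod _ fun i _ =>
      (measurable_pi_apply i).pow_const _).const_mul _

lemma poly_null_fin : ∀ (n : ℕ) (p : MvPolynomial (Fin n) ℂ), p ≠ 0 →
    volume {x : Fin n → ℂ | MvPolynomial.eval x p = 0} = 0 := by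
  intro n
  induction n with
  | zero =>
    intro p hp
    convert measure_empty (μ := (volume : Measure (Fin 0 → ℂ)))
    ext x
    simp only [Set.mem_setOf_eq, Set.mem_empty_iff_false, iff_false]
    obtain ⟨a, rfl⟩ := MvPolynomial.C_surjective (Fin 0) p
    simpa using fun h => hp (by simp [h])
  | succ n ih =>
    intro p hp
    set S := {x : Fin (n+1) → ℂ | MvPolynomial.eval x p = 0} with hS
    have hSm : MeasurableSet S := measurableSet_eq_fun (measurable_mv_eval p) measurable_const
    have hmp := (volume_preserving_piFinSuccAbove (fun _ : Fin (n+1) => ℂ) 0).symm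
    rw [← hmp.measure_preimage hSm.nullMeasurableSet]
    set e := (MeasurableEquiv.piFinSuccAbove (fun _ : Fin (n+1) => ℂ) 0).symm
    have hpre : e ⁻¹' S = {ys : ℂ × (Fin n → ℂ) |
        Polynomial.eval ys.1 ((finSuccEquiv ℂ n p).map (MvPolynomial.eval ys.2)) = 0} := by
      ext ⟨y, s⟩
      simp only [Set.mem_preimage, Set.mem_setOf_eq, hS]
      rw [show e (y, s) = Fin.cons y s from Fin.insertNth_zero' y s,
        eval_eq_eval_mv_eval']
    rw [hpre]
    have hQm : MeasurableSet {ys : ℂ × (Fin n → ℂ) |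
        Polynomial.eval ys.1 ((finSuccEquiv ℂ n p).map (MvPolynomial.eval ys.2)) = 0} := by
      rw [← hpre]; exact e.measurable hSm
    rw [show (volume : Measure (ℂ × (Fin n → ℂ))) = Measure.prod volume volume from rfl]
    rw [Measure.prod_apply_symm hQm]
    have hP : finSuccEquiv ℂ n p ≠ 0 := fun h => hp (by
      simpa using (finSuccEquiv ℂ n).injective (h.trans (map_zero _).symm))
    have hc : (finSuccEquiv ℂ n p).leadingCoeff ≠ 0 := Polynomial.leadingCoeff_ne_zero.2 hP
    have hae : ∀ᵐ s : Fin n → ℂ, MvPolynomial.eval s ((finSuccEquiv ℂ n p).leadingCoeff) ≠ 0 := by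
      rw [ae_iff]
      simpa using ih _ hc
    rw [lintegral_eq_zero_iff (by
      exact measurable_measure_prodMk_right (μ := (volume : Measure ℂ)) hQm)]
    filter_upwards [hae] with s hs
    have hmap : (finSuccEquiv ℂ n p).map (MvPolynomial.eval s) ≠ 0 := by
      intro h
      apply hs
      have h2 : ((finSuccEquiv ℂ n p).map (MvPolynomial.eval s)).coeff
          (finSuccEquiv ℂ n p).natDegree = 0 := by rw [h]; simp
      rwa [Polynomial.coeff_map] at h2
    have hfin : Set.Finite {y : ℂ | Polynomial.eval y
        ((finSuccEquiv ℂ n p).map (MvPolynomial.eval s)) = 0} :=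
      Polynomial.finite_setOf_isRoot hmap
    simp only [Pi.zero_apply]
    exact Set.Finite.measure_zero (by exact hfin) volume

lemma poly_null {σ : Type*} [Fintype σ] (p : MvPolynomial σ ℂ) (hp : p ≠ 0) :
    volume {x : σ → ℂ | MvPolynomial.eval x p = 0} = 0 := by
  let f := Fintype.equivFin σ
  set S := {x : σ → ℂ | MvPolynomial.eval x p = 0} with hS
  have hSm : MeasurableSet S := measurableSet_eq_fun (measurable_mv_eval p) measurable_const
  have hmp := volume_measurePreserving_piCongrLeft (fun _ : σ => ℂ) f.symm
  rw [← hmp.measure_preimage hSm.nullMeasurableSet]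
  have hq : MvPolynomial.rename f p ≠ 0 :=
    fun h => hp (MvPolynomial.rename_injective _ f.injective (by simpa using h))
  have : ⇑(MeasurableEquiv.piCongrLeft (fun _ : σ => ℂ) f.symm) ⁻¹' S
      = {y : Fin (Fintype.card σ) → ℂ | MvPolynomial.eval y (MvPolynomial.rename f p) = 0} := by
    ext y
    simp only [Set.mem_preimage, Set.mem_setOf_eq, hS, MvPolynomial.eval_rename]
    have happ : ∀ a : σ, (MeasurableEquiv.piCongrLeft (fun _ : σ => ℂ) f.symm) y a = y (f a) := by
      intro a
      have := Equiv.piCongrLeft_apply_apply (fun _ : σ => ℂ) f.symm y (f a)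
      simpa [MeasurableEquiv.piCongrLeft] using this
    rw [show (MeasurableEquiv.piCongrLeft (fun _ : σ => ℂ) f.symm) y = fun a => y (f a)
      from funext happ]
    rfl
  rw [this]
  exact poly_null_fin _ _ hq

-- curry over Fin n
lemma curry_fin (n : ℕ) (κ : Type) [Fintype κ] :
    ∃ e : ((Fin n × κ) → ℂ) ≃ᵐ (Fin n → κ → ℂ),
      MeasurePreserving e volume volume ∧ ∀ y a b, e y a b = y (a, b) := by
  induction n with
  | zero =>
    refine ⟨(MeasurableEquiv.ofUniqueOfUnique _ Unit).trans
      (MeasurableEquiv.ofUniqueOfUnique (Fin 0 → κ → ℂ) Unit).symm,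
      ((volume_preserving_pi_empty _).symm _).comp (volume_preserving_pi_empty _), ?_⟩
    intro y a
    exact absurd a.2 (Nat.not_lt_zero _)
  | succ n ih =>
    obtain ⟨e, he, hef⟩ := ih
    let ψ : (κ ⊕ (Fin n × κ)) ≃ (Fin (n+1) × κ) :=
      { toFun := fun s => Sum.rec (fun b => (0, b)) (fun jb => (jb.1.succ, jb.2)) s
        invFun := fun ab => Fin.cases (Sum.inl ab.2) (fun j => Sum.inr (j, ab.2)) ab.1
        left_inv := by rintro (b | ⟨j, b⟩) <;> simp
        right_inv := by
          rintro ⟨a, b⟩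
          refine Fin.cases ?_ (fun j => ?_) a <;> simp }
    let e1 : ((Fin (n+1) × κ) → ℂ) ≃ᵐ ((κ ⊕ (Fin n × κ)) → ℂ) :=
      (MeasurableEquiv.piCongrLeft (fun _ : Fin (n+1) × κ => ℂ) ψ).symm
    let e2 : ((κ ⊕ (Fin n × κ)) → ℂ) ≃ᵐ (κ → ℂ) × ((Fin n × κ) → ℂ) :=
      MeasurableEquiv.sumPiEquivProdPi _
    let e3 : ((κ → ℂ) × ((Fin n × κ) → ℂ)) ≃ᵐ ((κ → ℂ) × (Fin n → κ → ℂ)) :=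
      (MeasurableEquiv.refl _).prodCongr e
    let e4 : ((κ → ℂ) × (Fin n → κ → ℂ)) ≃ᵐ (Fin (n+1) → κ → ℂ) :=
      (MeasurableEquiv.piFinSuccAbove (fun _ : Fin (n+1) => κ → ℂ) 0).symm
    refine ⟨e1.trans (e2.trans (e3.trans e4)), ?_, ?_⟩
    · have h1 : MeasurePreserving e1 volume volume :=
        (volume_measurePreserving_piCongrLeft (fun _ => ℂ) ψ).symm _
      have h2 : MeasurePreserving e2 volume volume :=
        volume_measurePreserving_sumPiEquivProdPi _
      have h3 : MeasurePreserving e3 volume volume :=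
        (MeasurePreserving.id _).prod he
      have h4 : MeasurePreserving e4 volume volume :=
        (volume_preserving_piFinSuccAbove (fun _ : Fin (n+1) => κ → ℂ) 0).symm _
      exact h4.comp (h3.comp (h2.comp h1))
    · intro y a b
      have he1 : ∀ s, e1 y s = y (ψ s) := fun s => by
        simp [e1, MeasurableEquiv.piCongrLeft]
      have hstep : (e1.trans (e2.trans (e3.trans e4))) y =
          Fin.cons (fun b => e1 y (Sum.inl b)) (e ((e1 y) ∘ Sum.inr)) := by
        show e4 (e3 (e2 (e1 y))) = _
        rw [show e4 (e3 (e2 (e1 y))) = Fin.insertNth 0 (e3 (e2 (e1 y))).1 (e3 (e2 (e1 y))).2 from rfl]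
        rw [Fin.insertNth_zero']
        rfl
      rw [hstep]
      refine Fin.cases ?_ (fun j => ?_) a
      · rw [Fin.cons_zero]
        exact he1 (Sum.inl b)
      · rw [Fin.cons_succ, hef]
        exact he1 (Sum.inr (j, b))

lemma curry_exists (α κ : Type) [Fintype α] [Fintype κ] :
    ∃ e : ((α × κ) → ℂ) ≃ᵐ (α → κ → ℂ),
      MeasurePreserving e volume volume ∧ ∀ y a b, e y a b = y (a, b) := by
  obtain ⟨e0, he0, hef0⟩ := curry_fin (Fintype.card α) κ
  let f := Fintype.equivFin α
  let g1 : ((α × κ) → ℂ) ≃ᵐ ((Fin (Fintype.card α) × κ) → ℂ) :=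
    (MeasurableEquiv.piCongrLeft (fun _ : α × κ => ℂ)
      (f.symm.prodCongr (Equiv.refl κ))).symm
  let g3 : (Fin (Fintype.card α) → κ → ℂ) ≃ᵐ (α → κ → ℂ) :=
    MeasurableEquiv.piCongrLeft (fun _ : α => κ → ℂ) f.symm
  refine ⟨g1.trans (e0.trans g3), ?_, ?_⟩
  · exact ((volume_measurePreserving_piCongrLeft (fun _ : α => κ → ℂ) f.symm).comp he0).comp
      ((volume_measurePreserving_piCongrLeft (fun _ : α × κ => ℂ)
        (f.symm.prodCongr (Equiv.refl κ))).symm _)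
  · intro y a b
    show g3 (e0 (g1 y)) a b = y (a, b)
    have h3 : ∀ (h : Fin (Fintype.card α) → κ → ℂ) (a : α), g3 h a = h (f a) := by
      intro h a
      have := Equiv.piCongrLeft_apply_apply (fun _ : α => κ → ℂ) f.symm h (f a)
      simpa [g3, MeasurableEquiv.piCongrLeft] using this
    rw [h3, hef0]
    show y ((f.symm.prodCongr (Equiv.refl κ)) (f a, b)) = y (a, b)
    simp

lemma flatten_exists (α1 β1 α2 β2 α3 β3 α4 β4 : Type)
    [Fintype α1] [Fintype β1] [Fintype α2] [Fintype β2]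
    [Fintype α3] [Fintype β3] [Fintype α4] [Fintype β4] :
    ∃ Φ : (((α1 × β1) ⊕ ((α2 × β2) ⊕ ((α3 × β3) ⊕ (α4 × β4)))) → ℂ) ≃ᵐ
        ((α1 → β1 → ℂ) × ((α2 → β2 → ℂ) × ((α3 → β3 → ℂ) × (α4 → β4 → ℂ)))),
      MeasurePreserving Φ volume volume ∧
      ∀ y, (∀ a b, (Φ y).1 a b = y (.inl (a, b))) ∧
        (∀ a b, (Φ y).2.1 a b = y (.inr (.inl (a, b)))) ∧
        (∀ a b, (Φ y).2.2.1 a b = y (.inr (.inr (.inl (a, b))))) ∧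
        (∀ a b, (Φ y).2.2.2 a b = y (.inr (.inr (.inr (a, b))))) := by
  obtain ⟨c1, hc1, hf1⟩ := curry_exists α1 β1
  obtain ⟨c2, hc2, hf2⟩ := curry_exists α2 β2
  obtain ⟨c3, hc3, hf3⟩ := curry_exists α3 β3
  obtain ⟨c4, hc4, hf4⟩ := curry_exists α4 β4
  let s1 := MeasurableEquiv.sumPiEquivProdPi
    (fun _ : (α1 × β1) ⊕ ((α2 × β2) ⊕ ((α3 × β3) ⊕ (α4 × β4))) => ℂ)
  let s2 := MeasurableEquiv.sumPiEquivProdPi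
    (fun _ : (α2 × β2) ⊕ ((α3 × β3) ⊕ (α4 × β4)) => ℂ)
  let s3 := MeasurableEquiv.sumPiEquivProdPi (fun _ : (α3 × β3) ⊕ (α4 × β4) => ℂ)
  let inner3 := s3.trans (c3.prodCongr c4)
  let inner2 := s2.trans (c2.prodCongr inner3)
  refine ⟨s1.trans (c1.prodCongr inner2), ?_, ?_⟩
  · have m3 : MeasurePreserving inner3 volume volume := by
      have := (hc3.prod hc4).comp
        (volume_measurePreserving_sumPiEquivProdPi (fun _ : (α3 × β3) ⊕ (α4 × β4) => ℂ))
      exact this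
    have m2 : MeasurePreserving inner2 volume volume := by
      have := (hc2.prod m3).comp
        (volume_measurePreserving_sumPiEquivProdPi (fun _ : (α2 × β2) ⊕ ((α3 × β3) ⊕ (α4 × β4)) => ℂ))
      exact this
    have := (hc1.prod m2).comp (volume_measurePreserving_sumPiEquivProdPi
      (fun _ : (α1 × β1) ⊕ ((α2 × β2) ⊕ ((α3 × β3) ⊕ (α4 × β4))) => ℂ))
    exact this
  · intro y
    refine ⟨fun a b => ?_, fun a b => ?_, fun a b => ?_, fun a b => ?_⟩
    · exact hf1 _ a b
    · exact hf2 _ a b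
    · exact hf3 _ a b
    · exact hf4 _ a b

lemma det_mem {R : Type*} [CommRing R] {S : Subring R} {n : Type*} [DecidableEq n] [Fintype n]
    {A : Matrix n n R} (h : ∀ i j, A i j ∈ S) : A.det ∈ S := by
  rw [Matrix.det_apply]
  exact Subring.sum_mem _ fun σ _ =>
    Subring.zsmul_mem _ (Subring.prod_mem _ fun i _ => h _ _) _

lemma adjugate_mem {R : Type*} [CommRing R] {S : Subring R} {n : Type*} [DecidableEq n] [Fintype n]
    {A : Matrix n n R} (h : ∀ i j, A i j ∈ S) (i j : n) : A.adjugate i j ∈ S := by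
  rw [Matrix.adjugate_apply]
  apply det_mem
  intro a b
  rw [Matrix.updateRow_apply]
  split
  · rw [Pi.single_apply]
    split
    · exact S.one_mem
    · exact S.zero_mem
  · exact h a b

noncomputable section
namespace Cor5

abbrev Jm (m : ℕ) : ℕ := (m + 3) * ((m + 3) - 2)

example (m : ℕ) : Jm m = (m+3)*(m+1) := rfl

abbrev Em (m : ℕ) :=
  (Fin (m+3) → Fin (m+3) → ℂ) × (Fin (m+3) → Fin (m+3) → ℂ) ×
    (Fin (Jm m) → Fin (m+3) → ℂ) × (Fin (m+3) → Fin (Jm m) → ℂ)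

def rr (m : ℕ) (k : Fin (m+3)) : Fin (m+3) := k + 1

lemma rr_ne (m : ℕ) (k : Fin (m+3)) : rr m k ≠ k := by
  unfold rr
  intro h
  have h2 := congrArg Fin.val h
  rw [Fin.val_add_one] at h2
  rcases eq_or_ne k (Fin.last (m+2)) with hk | hk
  · rw [if_pos hk] at h2
    rw [hk] at h2
    simp [Fin.last] at h2
  · rw [if_neg hk] at h2
    omega

def TT (m : ℕ) := Σ k : Fin (m+3), {i : Fin (m+3) // i ≠ k ∧ i ≠ rr m k}

instance (m : ℕ) : Fintype (TT m) := by unfold TT; infer_instance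

lemma card_TT (m : ℕ) : Fintype.card (TT m) = Jm m := by
  unfold TT
  rw [Fintype.card_sigma]
  have : ∀ k : Fin (m+3), Fintype.card {i : Fin (m+3) // i ≠ k ∧ i ≠ rr m k} = m + 1 := by
    intro k
    rw [Fintype.card_subtype]
    have h2 : (Finset.univ.filter fun i : Fin (m+3) => i ≠ k ∧ i ≠ rr m k)
        = ({k, rr m k} : Finset (Fin (m+3)))ᶜ := by
      ext i
      simp [not_or]
    rw [h2, Finset.card_compl, Finset.card_insert_of_notMem (by simp [(rr_ne m k).symm]),
      Finset.card_singleton, Fintype.card_fin]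
    omega
  simp only [this, Finset.sum_const, Finset.card_univ, Fintype.card_fin, smul_eq_mul]
  show (m+3) * (m+1) = Jm m
  rfl

def eT (m : ℕ) : TT m ≃ Fin (Jm m) := Fintype.equivFinOfCardEq (card_TT m)

section Defs

variable (m : ℕ)

def h1f (k i : Fin (m+3)) : Em m → ℂ := fun x => x.1 k i
def h2f (k i : Fin (m+3)) : Em m → ℂ := fun x => x.2.1 k i
def pf (j : Fin (Jm m)) (i : Fin (m+3)) : Em m → ℂ := fun x => x.2.2.1 j i
def qf (k : Fin (m+3)) (j : Fin (Jm m)) : Em m → ℂ := fun x => x.2.2.2 k j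

/-- function-valued alignment matrix -/
def Mf : Matrix (Fin (Jm m)) (Fin (Jm m)) (Em m → ℂ) := fun j j' =>
  let t := (eT m).symm j
  qf m t.1 j' * (pf m j' t.2.1 * h1f m t.1 (rr m t.1) - pf m j' (rr m t.1) * h1f m t.1 t.2.1)

def bf : Fin (Jm m) → (Em m → ℂ) := fun j =>
  let t := (eT m).symm j
  h2f m t.1 (rr m t.1) * h1f m t.1 t.2.1 - h2f m t.1 t.2.1 * h1f m t.1 (rr m t.1)

def Uf : Fin (Jm m) → (Em m → ℂ) := (Mf m).adjugate *ᵥ bf m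

def df : Em m → ℂ := (Mf m).det

def Pf (k : Fin (m+3)) : Em m → ℂ :=
  (h2f m k k * df m + ∑ j, Uf m j * qf m k j * pf m j k) * h1f m k (rr m k) -
    (h2f m k (rr m k) * df m + ∑ j, Uf m j * qf m k j * pf m j (rr m k)) * h1f m k k

def Ff : Em m → ℂ := (∏ k, ∏ i, h1f m k i) * df m * ∏ k, Pf m k

end Defs


lemma good_point (m : ℕ) (x : Em m) (hF : Ff m x ≠ 0) :
    ∃ u : Fin (Jm m) → ℂ,
      ∀ v : Fin (m+3) → Fin (m+3) → Fin 2 → ℂ,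
        (∀ k i, v k i = ![x.1 k i,
            x.2.1 k i + ∑ j : Fin (Jm m), u j * x.2.2.2 k j * x.2.2.1 j i]) →
        ∀ k : Fin (m+3),
          ∃ W : Submodule ℂ (Fin 2 → ℂ),
            Module.finrank ℂ W = 1 ∧
            (∀ i, i ≠ k → v k i ∈ W) ∧
            v k k ∉ W := by
  classical
  -- decompose the nonvanishing hypothesis
  have hF' : ((∏ k, ∏ i, h1f m k i) x) * df m x * ((∏ k, Pf m k) x) ≠ 0 := hF
  have hh1 : ∀ k i, x.1 k i ≠ 0 := by
    intro k i
    have h1 : (∏ k, ∏ i, h1f m k i) x ≠ 0 := fun h => hF' (by rw [h]; ring)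
    rw [Finset.prod_apply] at h1
    have h2 := Finset.prod_ne_zero_iff.1 h1 k (Finset.mem_univ k)
    rw [Finset.prod_apply] at h2
    exact Finset.prod_ne_zero_iff.1 h2 i (Finset.mem_univ i)
  have hd : df m x ≠ 0 := fun h => hF' (by rw [h]; ring)
  have hP : ∀ k, Pf m k x ≠ 0 := by
    intro k
    have h1 : (∏ k, Pf m k) x ≠ 0 := fun h => hF' (by rw [h]; ring)
    rw [Finset.prod_apply] at h1
    exact Finset.prod_ne_zero_iff.1 h1 k (Finset.mem_univ k)
  -- pointwise matrix and vector
  set ev : (Em m → ℂ) →+* ℂ := Pi.evalRingHom (fun _ : Em m => ℂ) x with hev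
  set Mx : Matrix (Fin (Jm m)) (Fin (Jm m)) ℂ := ev.mapMatrix (Mf m) with hMx
  set bx : Fin (Jm m) → ℂ := fun j => bf m j x with hbx
  have hdet : Mx.det = df m x := (ev.map_det (Mf m)).symm
  -- the relay gains
  set u : Fin (Jm m) → ℂ := fun j => Uf m j x / df m x with hu
  have hUx : ∀ j, Uf m j x = (Mx.adjugate *ᵥ bx) j := by
    intro j
    have hadj : Mx.adjugate = ev.mapMatrix (Mf m).adjugate := (ev.map_adjugate (Mf m)).symm
    rw [hadj]
    show ((Mf m).adjugate *ᵥ bf m) j x = _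
    simp only [Matrix.mulVec, dotProduct, RingHom.mapMatrix_apply, Matrix.map_apply]
    rw [Finset.sum_apply]
    rfl
  have hMu : Mx *ᵥ u = bx := by
    have h1 : u = (df m x)⁻¹ • (Mx.adjugate *ᵥ bx) := by
      funext j
      simp [hu, hUx j, div_eq_inv_mul]
    rw [h1, Matrix.mulVec_smul, Matrix.mulVec_mulVec, Matrix.mul_adjugate, hdet,
      Matrix.smul_mulVec, Matrix.one_mulVec, smul_smul, inv_mul_cancel₀ hd, one_smul]
  -- row equations
  have hrow : ∀ t : TT m,
      (x.2.1 t.1 t.2.1 + ∑ j, u j * x.2.2.2 t.1 j * x.2.2.1 j t.2.1) * x.1 t.1 (rr m t.1)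
      = (x.2.1 t.1 (rr m t.1) + ∑ j, u j * x.2.2.2 t.1 j * x.2.2.1 j (rr m t.1)) * x.1 t.1 t.2.1 := by
    intro t
    have h0 := congrFun hMu (eT m t)
    have hsymm : (eT m).symm (eT m t) = t := Equiv.symm_apply_apply _ _
    have hMe0 : ∀ j j', Mx j j' =
        x.2.2.2 ((eT m).symm j).1 j' *
          (x.2.2.1 j' (((eT m).symm j).2 : Fin (m+3)) *
              x.1 ((eT m).symm j).1 (rr m ((eT m).symm j).1)
            - x.2.2.1 j' (rr m ((eT m).symm j).1) *
              x.1 ((eT m).symm j).1 (((eT m).symm j).2 : Fin (m+3))) :=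
      fun j j' => rfl
    have hbe0 : ∀ j, bx j =
        x.2.1 ((eT m).symm j).1 (rr m ((eT m).symm j).1) *
            x.1 ((eT m).symm j).1 (((eT m).symm j).2 : Fin (m+3))
          - x.2.1 ((eT m).symm j).1 (((eT m).symm j).2 : Fin (m+3)) *
            x.1 ((eT m).symm j).1 (rr m ((eT m).symm j).1) :=
      fun j => rfl
    have ht1 : ((eT m).symm (eT m t)).1 = t.1 := by rw [hsymm]
    have ht2 : (((eT m).symm (eT m t)).2 : Fin (m+3)) = (t.2 : Fin (m+3)) := by rw [hsymm]
    rw [Matrix.mulVec, dotProduct] at h0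
    simp only [hMe0, hbe0, ht1, ht2] at h0
    have hsum : ∀ i : Fin (m+3), ∀ c : ℂ,
        ∑ j, (x.2.2.2 t.1 j * (x.2.2.1 j t.2.1 * x.1 t.1 (rr m t.1)
          - x.2.2.1 j (rr m t.1) * x.1 t.1 t.2.1)) * u j
        = (∑ j, u j * x.2.2.2 t.1 j * x.2.2.1 j t.2.1) * x.1 t.1 (rr m t.1)
          - (∑ j, u j * x.2.2.2 t.1 j * x.2.2.1 j (rr m t.1)) * x.1 t.1 t.2.1 := by
      intro _ _
      rw [Finset.sum_mul, Finset.sum_mul, ← Finset.sum_sub_distrib]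
      exact Finset.sum_congr rfl fun j _ => by ring
    rw [hsum t.2.1 0] at h0
    linear_combination h0
  -- the nondegeneracy at each receiver
  have hD : ∀ k : Fin (m+3),
      (x.2.1 k k + ∑ j, u j * x.2.2.2 k j * x.2.2.1 j k) * x.1 k (rr m k)
      - (x.2.1 k (rr m k) + ∑ j, u j * x.2.2.2 k j * x.2.2.1 j (rr m k)) * x.1 k k ≠ 0 := by
    intro k
    have hPk : Pf m k x =
        (x.2.1 k k * df m x + ∑ j, Uf m j x * x.2.2.2 k j * x.2.2.1 j k) * x.1 k (rr m k) -
        (x.2.1 k (rr m k) * df m x + ∑ j, Uf m j x * x.2.2.2 k j * x.2.2.1 j (rr m k)) * x.1 k k := by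
      show Pf m k x = _
      rw [Pf]
      simp only [Pi.sub_apply, Pi.mul_apply, Pi.add_apply, Finset.sum_apply]
      rfl
    have hU : ∀ j, Uf m j x = u j * df m x := fun j => by
      rw [hu]; field_simp
    intro h0
    apply hP k
    rw [hPk]
    simp only [hU]
    have : ∀ i, ∑ j, u j * df m x * x.2.2.2 k j * x.2.2.1 j i
        = df m x * ∑ j, u j * x.2.2.2 k j * x.2.2.1 j i := by
      intro i
      rw [Finset.mul_sum]
      exact Finset.sum_congr rfl fun j _ => by ring
    rw [this, this]
    linear_combination (df m x) * h0
  -- construct the subspaces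
  refine ⟨u, fun v hv k => ?_⟩
  set s : Fin (m+3) → ℂ := fun i => x.2.1 k i + ∑ j, u j * x.2.2.2 k j * x.2.2.1 j i with hs
  have hvki : ∀ i, v k i = ![x.1 k i, s i] := fun i => hv k i
  have hvr0 : v k (rr m k) 0 = x.1 k (rr m k) := by rw [hvki]; rfl
  have hvr1 : v k (rr m k) 1 = s (rr m k) := by rw [hvki]; rfl
  have hvrne : v k (rr m k) ≠ 0 := by
    intro h
    apply hh1 k (rr m k)
    rw [← hvr0, h]
    rfl
  refine ⟨Submodule.span ℂ {v k (rr m k)}, finrank_span_singleton hvrne, ?_, ?_⟩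
  · intro i hik
    rcases eq_or_ne i (rr m k) with hir | hir
    · rw [hir]; exact Submodule.mem_span_singleton_self _
    · have halign : s i * x.1 k (rr m k) = s (rr m k) * x.1 k i := by
        have := hrow ⟨k, ⟨i, hik, hir⟩⟩
        exact this
      rw [Submodule.mem_span_singleton]
      refine ⟨x.1 k i / x.1 k (rr m k), ?_⟩
      funext w
      rw [hvki, hvki]
      fin_cases w
      · show x.1 k i / x.1 k (rr m k) * x.1 k (rr m k) = x.1 k i
        exact div_mul_cancel₀ _ (hh1 k (rr m k))
      · show x.1 k i / x.1 k (rr m k) * s (rr m k) = s i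
        rw [div_mul_eq_mul_div, eq_comm, eq_div_iff (hh1 k (rr m k))]
        linear_combination halign
  · intro hmem
    rw [Submodule.mem_span_singleton] at hmem
    obtain ⟨c, hc⟩ := hmem
    have h0 := congrFun hc 0
    have h1 := congrFun hc 1
    rw [Pi.smul_apply, smul_eq_mul, hvr0] at h0
    rw [Pi.smul_apply, smul_eq_mul, hvr1] at h1
    have hvkk0 : v k k 0 = x.1 k k := by rw [hvki]; rfl
    have hvkk1 : v k k 1 = s k := by rw [hvki]; rfl
    rw [hvkk0] at h0
    rw [hvkk1] at h1
    have hzero : s k * x.1 k (rr m k) - s (rr m k) * x.1 k k = 0 := by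
      linear_combination s (rr m k) * h0 - x.1 k (rr m k) * h1
    exact hD k hzero

/-- The witness point. -/
def x0 (m : ℕ) : Em m :=
  (fun _ _ => 1,
   fun k i => if i = k then 1 else 0,
   fun j i => if i = (((eT m).symm j).2 : Fin (m+3)) then 1 else 0,
   fun k j => if ((eT m).symm j).1 = k then 1 else 0)

lemma TT_ext {m : ℕ} {t t' : TT m} (h1 : t.1 = t'.1)
    (h2 : (t.2 : Fin (m+3)) = (t'.2 : Fin (m+3))) : t = t' := by
  obtain ⟨k, i, hi1, hi2⟩ := t
  obtain ⟨k', i', hi1', hi2'⟩ := t'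
  dsimp at h1 h2
  subst h1
  subst h2
  rfl

lemma Mf_x0 (m : ℕ) :
    (Matrix.of fun j j' => Mf m j j' (x0 m)) = (1 : Matrix (Fin (Jm m)) (Fin (Jm m)) ℂ) := by
  funext j j'
  have hM : Mf m j j' (x0 m) =
      (if ((eT m).symm j').1 = ((eT m).symm j).1 then (1:ℂ) else 0) *
        ((if (((eT m).symm j).2 : Fin (m+3)) = (((eT m).symm j').2 : Fin (m+3)) then (1:ℂ) else 0) * 1
          - (if rr m ((eT m).symm j).1 = (((eT m).symm j').2 : Fin (m+3)) then (1:ℂ) else 0) * 1) := rfl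
  rw [Matrix.of_apply, hM, Matrix.one_apply]
  rcases eq_or_ne j j' with hjj | hjj
  · subst hjj
    rw [if_pos rfl, if_pos rfl, if_pos rfl,
      if_neg (fun h => ((eT m).symm j).2.2.2 h.symm)]
    ring
  · rcases eq_or_ne ((eT m).symm j').1 ((eT m).symm j).1 with h1 | h1
    · have hA : (((eT m).symm j).2 : Fin (m+3)) ≠ (((eT m).symm j').2 : Fin (m+3)) := by
        intro h2
        exact hjj ((eT m).symm.injective (TT_ext h1.symm h2))
      have hB : rr m ((eT m).symm j).1 ≠ (((eT m).symm j').2 : Fin (m+3)) := by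
        intro h2
        exact ((eT m).symm j').2.2.2 (h2.symm.trans (by rw [h1]))
      rw [if_pos h1, if_neg hA, if_neg hB, if_neg hjj]
      ring
    · rw [if_neg h1, if_neg hjj]
      ring

lemma bf_x0 (m : ℕ) (j : Fin (Jm m)) : bf m j (x0 m) = 0 := by
  have hb : bf m j (x0 m) =
      (if rr m ((eT m).symm j).1 = ((eT m).symm j).1 then (1:ℂ) else 0) * 1
        - (if (((eT m).symm j).2 : Fin (m+3)) = ((eT m).symm j).1 then (1:ℂ) else 0) * 1 := rfl
  rw [hb, if_neg (rr_ne m _), if_neg ((eT m).symm j).2.2.1]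
  ring

lemma df_x0 (m : ℕ) : df m (x0 m) = 1 := by
  have : df m (x0 m) =
      (Matrix.of fun j j' => Mf m j j' (x0 m)).det :=
    (Pi.evalRingHom (fun _ : Em m => ℂ) (x0 m)).map_det (Mf m)
  rw [this, Mf_x0, Matrix.det_one]

lemma Uf_x0 (m : ℕ) (j : Fin (Jm m)) : Uf m j (x0 m) = 0 := by
  show (((Mf m).adjugate) *ᵥ (bf m)) j (x0 m) = 0
  rw [Matrix.mulVec, dotProduct, Finset.sum_apply]
  refine Finset.sum_eq_zero fun j' _ => ?_
  show (Mf m).adjugate j j' (x0 m) * bf m j' (x0 m) = 0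
  rw [bf_x0, mul_zero]

lemma Pf_x0 (m : ℕ) (k : Fin (m+3)) : Pf m k (x0 m) = 1 := by
  have hP : Pf m k (x0 m) =
      ((x0 m).2.1 k k * df m (x0 m)
          + ∑ j, Uf m j (x0 m) * (x0 m).2.2.2 k j * (x0 m).2.2.1 j k) * (x0 m).1 k (rr m k) -
        ((x0 m).2.1 k (rr m k) * df m (x0 m)
          + ∑ j, Uf m j (x0 m) * (x0 m).2.2.2 k j * (x0 m).2.2.1 j (rr m k)) * (x0 m).1 k k := by
    rw [Pf]
    simp only [Pi.sub_apply, Pi.mul_apply, Pi.add_apply, Finset.sum_apply]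
    rfl
  have e1 : (x0 m).2.1 k k = 1 := if_pos rfl
  have e2 : (x0 m).2.1 k (rr m k) = 0 := if_neg (rr_ne m k)
  have e3 : ∀ i, (x0 m).1 k i = 1 := fun _ => rfl
  rw [hP, e1, e2, e3, e3, df_x0]
  simp only [Uf_x0, zero_mul]
  simp

lemma Ff_x0 (m : ℕ) : Ff m (x0 m) = 1 := by
  have h : Ff m (x0 m) =
      ((∏ k, ∏ i, h1f m k i) (x0 m)) * df m (x0 m) * ((∏ k, Pf m k) (x0 m)) := rfl
  rw [h, df_x0, Finset.prod_apply]
  have h1 : ∀ k : Fin (m+3), (∏ i, h1f m k i) (x0 m) = 1 := by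
    intro k
    rw [Finset.prod_apply]
    exact Finset.prod_eq_one fun i _ => rfl
  rw [Finset.prod_congr rfl fun k _ => h1 k, Finset.prod_const_one]
  rw [Finset.prod_apply, Finset.prod_congr rfl fun k _ => Pf_x0 m k, Finset.prod_const_one]
  ring

abbrev ιm (m : ℕ) :=
  (Fin (m+3) × Fin (m+3)) ⊕ ((Fin (m+3) × Fin (m+3)) ⊕
    ((Fin (Jm m) × Fin (m+3)) ⊕ (Fin (m+3) × Fin (Jm m))))

lemma Ff_poly (m : ℕ) (Φ : (ιm m → ℂ) → Em m)
    (hΦ1 : ∀ y a b, (Φ y).1 a b = y (Sum.inl (a, b)))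
    (hΦ2 : ∀ y a b, (Φ y).2.1 a b = y (Sum.inr (Sum.inl (a, b))))
    (hΦ3 : ∀ y a b, (Φ y).2.2.1 a b = y (Sum.inr (Sum.inr (Sum.inl (a, b)))))
    (hΦ4 : ∀ y a b, (Φ y).2.2.2 a b = y (Sum.inr (Sum.inr (Sum.inr (a, b))))) :
    ∃ g : MvPolynomial (ιm m) ℂ, ∀ y, Ff m (Φ y) = MvPolynomial.eval y g := by
  classical
  let δ : MvPolynomial (ιm m) ℂ →+* ((ιm m → ℂ) → ℂ) :=
    Pi.ringHom fun y => (MvPolynomial.eval y : MvPolynomial (ιm m) ℂ →+* ℂ)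
  let Θ : (Em m → ℂ) →+* ((ιm m → ℂ) → ℂ) :=
    Pi.ringHom fun y => Pi.evalRingHom (fun _ : Em m => ℂ) (Φ y)
  let SR : Subring (Em m → ℂ) := δ.range.comap Θ
  have hmem : ∀ G : Em m → ℂ, G ∈ SR ↔ ∃ g, ∀ y, G (Φ y) = MvPolynomial.eval y g := by
    intro G
    rw [show (G ∈ SR) = (Θ G ∈ δ.range) from rfl, RingHom.mem_range]
    constructor
    · rintro ⟨g, hg⟩
      exact ⟨g, fun y => (congrFun hg y).symm⟩
    · rintro ⟨g, hg⟩
      exact ⟨g, funext fun y => (hg y).symm⟩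
  have hc1 : ∀ a b, h1f m a b ∈ SR := fun a b =>
    (hmem _).2 ⟨MvPolynomial.X (Sum.inl (a, b)), fun y => by
      simp only [h1f, hΦ1, MvPolynomial.eval_X]⟩
  have hc2 : ∀ a b, h2f m a b ∈ SR := fun a b =>
    (hmem _).2 ⟨MvPolynomial.X (Sum.inr (Sum.inl (a, b))), fun y => by
      simp only [h2f, hΦ2, MvPolynomial.eval_X]⟩
  have hc3 : ∀ a b, pf m a b ∈ SR := fun a b =>
    (hmem _).2 ⟨MvPolynomial.X (Sum.inr (Sum.inr (Sum.inl (a, b)))), fun y => by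
      simp only [pf, hΦ3, MvPolynomial.eval_X]⟩
  have hc4 : ∀ a b, qf m a b ∈ SR := fun a b =>
    (hmem _).2 ⟨MvPolynomial.X (Sum.inr (Sum.inr (Sum.inr (a, b)))), fun y => by
      simp only [qf, hΦ4, MvPolynomial.eval_X]⟩
  have hMmem : ∀ j j', Mf m j j' ∈ SR := fun j j' =>
    Subring.mul_mem _ (hc4 _ _) (Subring.sub_mem _
      (Subring.mul_mem _ (hc3 _ _) (hc1 _ _)) (Subring.mul_mem _ (hc3 _ _) (hc1 _ _)))
  have hbmem : ∀ j, bf m j ∈ SR := fun j =>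
    Subring.sub_mem _ (Subring.mul_mem _ (hc2 _ _) (hc1 _ _))
      (Subring.mul_mem _ (hc2 _ _) (hc1 _ _))
  have hdmem : df m ∈ SR := det_mem hMmem
  have hUmem : ∀ j, Uf m j ∈ SR := by
    intro j
    show ∑ j', (Mf m).adjugate j j' * bf m j' ∈ SR
    exact Subring.sum_mem _ fun j' _ =>
      Subring.mul_mem _ (adjugate_mem hMmem j j') (hbmem j')
  have hPmem : ∀ k, Pf m k ∈ SR := fun k =>
    Subring.sub_mem _
      (Subring.mul_mem _ (Subring.add_mem _ (Subring.mul_mem _ (hc2 _ _) hdmem)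
        (Subring.sum_mem _ fun j _ => Subring.mul_mem _
          (Subring.mul_mem _ (hUmem j) (hc4 _ _)) (hc3 _ _))) (hc1 _ _))
      (Subring.mul_mem _ (Subring.add_mem _ (Subring.mul_mem _ (hc2 _ _) hdmem)
        (Subring.sum_mem _ fun j _ => Subring.mul_mem _
          (Subring.mul_mem _ (hUmem j) (hc4 _ _)) (hc3 _ _))) (hc1 _ _))
  have hFmem : Ff m ∈ SR :=
    Subring.mul_mem _ (Subring.mul_mem _
      (Subring.prod_mem _ fun k _ => Subring.prod_mem _ fun i _ => hc1 k i) hdmem)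
      (Subring.prod_mem _ fun k _ => hPmem k)
  exact (hmem _).1 hFmem

lemma Ff_ae (m : ℕ) : ∀ᵐ x : Em m ∂volume, Ff m x ≠ 0 := by
  obtain ⟨Φ, hΦmp, hΦc⟩ := flatten_exists (Fin (m+3)) (Fin (m+3)) (Fin (m+3)) (Fin (m+3))
    (Fin (Jm m)) (Fin (m+3)) (Fin (m+3)) (Fin (Jm m))
  obtain ⟨g, hg⟩ := Ff_poly m Φ (fun y => (hΦc y).1) (fun y => (hΦc y).2.1)
    (fun y => (hΦc y).2.2.1) (fun y => (hΦc y).2.2.2)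
  have hg0 : g ≠ 0 := by
    intro h
    have h2 := hg (Φ.symm (x0 m))
    rw [Φ.apply_symm_apply, Ff_x0, h] at h2
    simp at h2
  rw [ae_iff]
  have hset : {x : Em m | ¬ Ff m x ≠ 0} = {x | Ff m x = 0} := by ext x; simp
  rw [hset]
  have hpre : ⇑Φ ⁻¹' {x : Em m | Ff m x = 0} = {y | MvPolynomial.eval y g = 0} := by
    ext y
    simp [Set.mem_preimage, hg y]
  have hmeasy : MeasurableSet {y : ιm m → ℂ | MvPolynomial.eval y g = 0} :=
    measurableSet_eq_fun (measurable_mv_eval g) measurable_const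
  have hmeas : MeasurableSet {x : Em m | Ff m x = 0} := by
    rw [← MeasurableEquiv.measurableSet_preimage Φ, hpre]
    exact hmeasy
  rw [← hΦmp.measure_preimage hmeas.nullMeasurableSet, hpre]
  exact poly_null g hg0

end Cor5
end

/-- **Corollary 5 (linear-algebraic content): K-user interference channel with K(K-2)
single-antenna relays.** For almost every choice of the channel coefficients (`h₁`, `h₂`
direct channels in slots 1 and 2, `p` scalar slot-1 transmitter-to-relay channels, `q`
scalar slot-2 relay-to-receiver channels), there exist relay precoding scalars
`u_1, …, u_{K(K-2)} ∈ ℂ` such that, with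
`v^k_i = (h_{ki}(1), h_{ki}(2) + Σ_j u_j·q_{k,j}·p_{j,i}) ∈ ℂ²`, for every receiver `k`:
(a) all `K-1` interference vectors `v^k_i` (`i ≠ k`) lie on a single one-dimensional
subspace of `ℂ²`, and (b) the intended vector `v^k_k` does not lie on that subspace. -/
theorem kuser_ic_single_antenna_relays_alignment (K : ℕ) (hK : 3 ≤ K) :
    ∀ᵐ hpq ∂(volume : Measure ((Fin K → Fin K → ℂ) × (Fin K → Fin K → ℂ) ×
        (Fin (K * (K - 2)) → Fin K → ℂ) × (Fin K → Fin (K * (K - 2)) → ℂ))),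
      ∃ u : Fin (K * (K - 2)) → ℂ,
        ∀ v : Fin K → Fin K → Fin 2 → ℂ,
          (∀ k i, v k i = ![hpq.1 k i,
              hpq.2.1 k i +
                ∑ j : Fin (K * (K - 2)), u j * hpq.2.2.2 k j * hpq.2.2.1 j i]) →
          ∀ k : Fin K,
            ∃ W : Submodule ℂ (Fin 2 → ℂ),
              Module.finrank ℂ W = 1 ∧
              (∀ i, i ≠ k → v k i ∈ W) ∧
              v k k ∉ W := by
  obtain ⟨m, rfl⟩ : ∃ m, K = m + 3 := ⟨K - 3, by omega⟩
  filter_upwards [Cor5.Ff_ae m] with x hx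
  exact Cor5.good_point m x hx
end
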